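/- Let (λ_k)_{k∈ℤ*} be a sequence of pairwise distinct real numbers satisfying the gap condition (40) with constants M ∈ ℕ*, δ > 0, and suppose there exist d̃ ≥ 0 and C > 0 such that |λ_{k+1} - λ_k| ≥ C|k|^{-d̃/(M-1)} for all k ∈ ℤ*. Then there exists C' > 0 such that for the block-diagonal operator F(Λ) built from the divided-difference matrices F_m(Λ^m) on the equivalence classes E_m, one has ‖F(Λ)x‖_{ℓ²}² ≤ C'·∑_{k∈ℤ*} |k|^{2d̃}|x_k|² for all x ∈ h^{d̃}(ℂ). In particular h^{d̃}(ℂ) ⊆ D(F(Λ)). -/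
import Mathlib

/-- The block-diagonal divided-difference operator `F(Λ)` of Proposition B.1:
`(F(Λ)x)_k` is the `k`-th entry of `F_{m(k)}(Λ^{m(k)}) x^{m(k)}`, where the class
`E (cls k)` is enumerated in increasing index order. -/
noncomputable def blockOp (lam : ℤ → ℝ) (E : ℤ → Finset ℤ) (cls : ℤ → ℤ)
    (x : ℤ → ℂ) (k : ℤ) : ℂ :=
  ∑ l ∈ E (cls k),
    (if k ≤ l then
      ((∏ p ∈ (E (cls k)).filter (fun p => p ≤ l ∧ p ≠ k), (lam k - lam p)⁻¹ : ℝ) : ℂ)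
    else 0) * x l

set_option maxHeartbeats 2000000 in
theorem stmt_5 (lam : ℤ → ℝ) (cls : ℤ → ℤ) (E : ℤ → Finset ℤ)
    (M : ℕ) (hM : 2 ≤ M) (δ C d : ℝ) (hδ : 0 < δ) (hC : 0 < C) (hd : 0 ≤ d)
    (hE : ∀ m l : ℤ, l ∈ E m ↔ (l ≠ 0 ∧ cls l = m))
    (hcard : ∀ m : ℤ, (E m).card ≤ M - 1)
    (hdist : ∀ k l : ℤ, k ≠ 0 → l ≠ 0 → k ≠ l → lam k ≠ lam l)
    (hord : ∀ k l : ℤ, k ≠ 0 → l ≠ 0 → k ≤ l → lam k ≤ lam l)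
    (hgap : ∀ k : ℤ, k ≠ 0 → k + (M : ℤ) ≠ 0 → δ * M ≤ lam (k + (M : ℤ)) - lam k)
    (hclose : ∀ k l : ℤ, k ≠ 0 → l ≠ 0 → cls k = cls l → |lam k - lam l| < δ * (M - 1))
    (hfar : ∀ k l : ℤ, k ≠ 0 → l ≠ 0 → cls k ≠ cls l → δ ≤ |lam k - lam l|)
    (hlow : ∀ k : ℤ, k ≠ 0 → k + 1 ≠ 0 →
      C * |(k : ℝ)| ^ (-(d / ((M : ℝ) - 1))) ≤ |lam (k + 1) - lam k|) :
    ∃ C' > 0, ∀ x : ℤ → ℂ,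
      (Summable fun k : {k : ℤ // k ≠ 0} => |(k.1 : ℝ)| ^ (2 * d) * ‖x k.1‖ ^ 2) →
      (Summable fun k : {k : ℤ // k ≠ 0} => ‖blockOp lam E cls x k.1‖ ^ 2) ∧
      ∑' k : {k : ℤ // k ≠ 0}, ‖blockOp lam E cls x k.1‖ ^ 2 ≤
        C' * ∑' k : {k : ℤ // k ≠ 0}, |(k.1 : ℝ)| ^ (2 * d) * ‖x k.1‖ ^ 2 := by
  have hMZ : (2 : ℤ) ≤ (M : ℤ) := by exact_mod_cast hM
  have hMR : (2 : ℝ) ≤ (M : ℝ) := by exact_mod_cast hM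
  have hM0 : (0 : ℝ) < (M : ℝ) - 1 := by linarith
  have hMne : ((M : ℝ) - 1) ≠ 0 := ne_of_gt hM0
  set e : ℝ := d / ((M : ℝ) - 1) with he
  have he0 : 0 ≤ e := div_nonneg hd hM0.le
  have hne1 : (-1 : ℤ) ≠ 0 := by decide
  have hne2 : (1 : ℤ) ≠ 0 := by decide
  have habs1 : ∀ k : ℤ, k ≠ 0 → (1 : ℝ) ≤ |(k : ℝ)| := by
    intro k hk
    have := Int.one_le_abs (by exact hk : k ≠ 0)
    exact_mod_cast this
  have hεpos : 0 < lam 1 - lam (-1) := by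
    have h1 := hord (-1) 1 hne1 hne2 (by decide)
    have h2 := hdist (-1) 1 hne1 hne2 (by decide)
    have := lt_of_le_of_ne h1 h2
    linarith
  set ε : ℝ := lam 1 - lam (-1) with hεdef
  -- gap over at least M steps
  have hgapM : ∀ a b : ℤ, a ≠ 0 → b ≠ 0 → a + (M : ℤ) ≤ b → δ * M ≤ lam b - lam a := by
    intro a b ha hb hab
    by_cases h : a + (M : ℤ) = 0
    · by_cases h2 : b - (M : ℤ) = 0
      · have hg := hgap (-1) hne1 (by omega)
        have hl1 : lam a ≤ lam (-1) := hord a (-1) ha hne1 (by omega)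
        have hl2 : lam (-1 + M) ≤ lam b := hord (-1 + M) b (by omega) hb (by omega)
        linarith
      · have hg := hgap (b - M) h2 (by omega)
        have hEq : b - (M : ℤ) + M = b := by ring
        rw [hEq] at hg
        have hl : lam a ≤ lam (b - M) := hord a (b - M) ha h2 (by omega)
        linarith
    · have hg := hgap a ha h
      have hl : lam (a + M) ≤ lam b := hord (a + M) b h hb hab
      linarith
  -- indices in the same class are within M - 1 of each other
  have hdiam : ∀ k p : ℤ, k ≠ 0 → p ≠ 0 → cls p = cls k → p ≤ k + (M : ℤ) - 1 := by
    intro k p hk hp hcl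
    by_contra hcon
    push_neg at hcon
    have hg := hgapM k p hk hp (by omega)
    have hcl2 := hclose k p hk hp hcl.symm
    have hle : lam p - lam k ≤ |lam k - lam p| := by
      rw [abs_sub_comm]; exact le_abs_self _
    nlinarith
  -- lower bound for distances of distinct nonzero eigenvalues with bounded indices
  have hpairlow : ∀ a b : ℤ, a ≠ 0 → b ≠ 0 → a < b → ∀ N : ℝ,
      |(a : ℝ)| ≤ N → |(b : ℝ)| ≤ N →
      min ε (C * (N + 1) ^ (-e)) ≤ lam b - lam a := by
    intro a b ha hb hab N hNa hNb
    have hN1 : (1 : ℝ) ≤ N := le_trans (habs1 a ha) hNa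
    have hNpos : (0 : ℝ) < N + 1 := by linarith
    rcases lt_or_ge a 0 with haneg | hapos
    · rcases lt_or_ge b 0 with hbneg | hbpos
      · -- both negative : use the gap at b - 1
        have h1 : b - 1 ≠ 0 := by omega
        have hl := hlow (b - 1) h1 (by omega)
        have hEq : b - 1 + 1 = b := by ring
        rw [hEq] at hl
        have hm : lam (b - 1) ≤ lam b := hord _ _ h1 hb (by omega)
        rw [show |lam b - lam (b - 1)| = lam b - lam (b - 1) from abs_of_nonneg (by linarith)] at hl
        have hm2 : lam a ≤ lam (b - 1) := hord a (b - 1) ha h1 (by omega)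
        have hbase : |((b - 1 : ℤ) : ℝ)| ≤ N + 1 := by
          have h3 : |((b : ℝ)) - 1| ≤ |(b : ℝ)| + |(1 : ℝ)| := abs_sub _ _
          push_cast
          simp only [abs_one] at h3
          linarith
        have hbasepos : (0 : ℝ) < |((b - 1 : ℤ) : ℝ)| := by
          have := habs1 (b - 1) h1; linarith
        have hmono : C * (N + 1) ^ (-e) ≤ C * |((b - 1 : ℤ) : ℝ)| ^ (-e) := by
          have := Real.rpow_le_rpow_of_nonpos hbasepos hbase (neg_nonpos.mpr he0)
          nlinarith
        calc min ε (C * (N + 1) ^ (-e)) ≤ C * (N + 1) ^ (-e) := min_le_right _ _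
          _ ≤ C * |((b - 1 : ℤ) : ℝ)| ^ (-e) := hmono
          _ ≤ lam b - lam (b - 1) := hl
          _ ≤ lam b - lam a := by linarith
      · -- a negative, b positive : use ε
        have h1 : lam a ≤ lam (-1) := hord a (-1) ha hne1 (by omega)
        have h2 : lam 1 ≤ lam b := hord 1 b hne2 hb (by omega)
        calc min ε (C * (N + 1) ^ (-e)) ≤ ε := min_le_left _ _
          _ ≤ lam b - lam a := by rw [hεdef]; linarith
    · -- both positive : use the gap at a
      have ha1 : 1 ≤ a := by omega
      have hl := hlow a ha (by omega)
      have hm : lam a ≤ lam (a + 1) := hord _ _ ha (by omega) (by omega)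
      rw [show |lam (a + 1) - lam a| = lam (a + 1) - lam a from abs_of_nonneg (by linarith)] at hl
      have hm2 : lam (a + 1) ≤ lam b := hord (a + 1) b (by omega) hb (by omega)
      have hbase : |((a : ℤ) : ℝ)| ≤ N + 1 := by linarith
      have hbasepos : (0 : ℝ) < |((a : ℤ) : ℝ)| := by
        have := habs1 a ha; linarith
      have hmono : C * (N + 1) ^ (-e) ≤ C * |((a : ℤ) : ℝ)| ^ (-e) := by
        have := Real.rpow_le_rpow_of_nonpos hbasepos hbase (neg_nonpos.mpr he0)
        nlinarith
      calc min ε (C * (N + 1) ^ (-e)) ≤ C * (N + 1) ^ (-e) := min_le_right _ _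
        _ ≤ C * |((a : ℤ) : ℝ)| ^ (-e) := hmono
        _ ≤ lam (a + 1) - lam a := hl
        _ ≤ lam b - lam a := by linarith
  set K : ℝ := ε⁻¹ + C⁻¹ * ((1 : ℝ) + M) ^ e + 1 with hKdef
  have hKaux : (0:ℝ) ≤ ε⁻¹ + C⁻¹ * ((1 : ℝ) + M) ^ e := by
    have h1 : (0:ℝ) ≤ ε⁻¹ := inv_nonneg.mpr hεpos.le
    have h2 : (0:ℝ) ≤ C⁻¹ * ((1 : ℝ) + M) ^ e := by positivity
    linarith
  have hK1 : (1 : ℝ) ≤ K := by rw [hKdef]; linarith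
  -- bound on a single inverse factor
  have hfac : ∀ k p : ℤ, k ≠ 0 → p ≠ 0 → cls p = cls k → p ≠ k →
      |(lam k - lam p)⁻¹| ≤ K * |(k : ℝ)| ^ e := by
    intro k p hk hp hcl hne
    have hd1 : p ≤ k + (M : ℤ) - 1 := hdiam k p hk hp hcl
    have hd2 : k ≤ p + (M : ℤ) - 1 := hdiam p k hp hk hcl.symm
    have hd1R : (p : ℝ) ≤ (k : ℝ) + (M : ℝ) - 1 := by exact_mod_cast hd1
    have hd2R : (k : ℝ) ≤ (p : ℝ) + (M : ℝ) - 1 := by exact_mod_cast hd2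
    set N : ℝ := |(k : ℝ)| + (M : ℝ) - 1 with hNdef
    have hk1 : (1 : ℝ) ≤ |(k : ℝ)| := habs1 k hk
    have habs_k : |(k : ℝ)| ≤ N := by rw [hNdef]; linarith
    have habs_p : |(p : ℝ)| ≤ N := by
      rw [hNdef]
      have h1 := le_abs_self (k : ℝ)
      have h2 := neg_le_abs (k : ℝ)
      rcases abs_cases (p : ℝ) with ⟨hp1, _⟩ | ⟨hp1, _⟩ <;> rw [hp1] <;> linarith
    have hNpos : (0 : ℝ) < N + 1 := by rw [hNdef]; linarith
    have hmin : min ε (C * (N + 1) ^ (-e)) ≤ |lam k - lam p| := by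
      rcases lt_or_gt_of_ne hne with h | h
      · have hm := hord p k hp hk h.le
        rw [abs_of_nonneg (by linarith)]
        exact hpairlow p k hp hk h N habs_p habs_k
      · have hm := hord k p hk hp h.le
        rw [abs_sub_comm, abs_of_nonneg (by linarith)]
        exact hpairlow k p hk hp h N habs_k habs_p
    have hminpos : 0 < min ε (C * (N + 1) ^ (-e)) := by
      apply lt_min hεpos
      positivity
    rw [abs_inv]
    have h2 : |lam k - lam p|⁻¹ ≤ (min ε (C * (N + 1) ^ (-e)))⁻¹ :=
      inv_anti₀ hminpos hmin
    have h3 : (min ε (C * (N + 1) ^ (-e)))⁻¹ ≤ ε⁻¹ + C⁻¹ * (N + 1) ^ e := by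
      rcases min_cases ε (C * (N + 1) ^ (-e)) with ⟨hmeq, _⟩ | ⟨hmeq, _⟩
      · rw [hmeq]
        have : (0 : ℝ) ≤ C⁻¹ * (N + 1) ^ e := by positivity
        linarith
      · rw [hmeq, mul_inv, Real.rpow_neg hNpos.le, inv_inv]
        have : (0 : ℝ) ≤ ε⁻¹ := inv_nonneg.mpr hεpos.le
        linarith
    have h4 : (N + 1) ^ e ≤ ((1 : ℝ) + M) ^ e * |(k : ℝ)| ^ e := by
      rw [← Real.mul_rpow (by linarith) (abs_nonneg _)]
      apply Real.rpow_le_rpow (by linarith) ?_ he0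
      rw [hNdef]
      nlinarith
    have hk1e : (1 : ℝ) ≤ |(k : ℝ)| ^ e := Real.one_le_rpow hk1 he0
    have hCinv : (0 : ℝ) ≤ C⁻¹ := inv_nonneg.mpr hC.le
    calc |lam k - lam p|⁻¹ ≤ ε⁻¹ + C⁻¹ * (N + 1) ^ e := le_trans h2 h3
      _ ≤ ε⁻¹ + C⁻¹ * (((1 : ℝ) + M) ^ e * |(k : ℝ)| ^ e) := by
          have := mul_le_mul_of_nonneg_left h4 hCinv
          linarith
      _ ≤ K * |(k : ℝ)| ^ e := by
          rw [hKdef]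
          have h5 : (0 : ℝ) ≤ ε⁻¹ := inv_nonneg.mpr hεpos.le
          have h6 : (0 : ℝ) ≤ C⁻¹ * ((1 : ℝ) + M) ^ e := by positivity
          nlinarith
  -- bound on a product of inverse factors
  have hprod : ∀ k l : ℤ, k ≠ 0 →
      |∏ p ∈ (E (cls k)).filter (fun p => p ≤ l ∧ p ≠ k), (lam k - lam p)⁻¹| ≤
        K ^ (M - 1) * |(k : ℝ)| ^ d := by
    intro k l hk
    have hk1 : (1 : ℝ) ≤ |(k : ℝ)| := habs1 k hk
    have hk1e : (1 : ℝ) ≤ |(k : ℝ)| ^ e := Real.one_le_rpow hk1 he0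
    set s := (E (cls k)).filter (fun p => p ≤ l ∧ p ≠ k) with hs
    have hcard_s : s.card ≤ M - 1 :=
      le_trans (Finset.card_le_card (Finset.filter_subset _ _)) (hcard _)
    have hbound : ∀ p ∈ s, |(lam k - lam p)⁻¹| ≤ K * |(k : ℝ)| ^ e := by
      intro p hp
      rw [hs, Finset.mem_filter] at hp
      obtain ⟨hpE, _, hpk⟩ := hp
      obtain ⟨hp0, hpc⟩ := (hE _ _).1 hpE
      exact hfac k p hk hp0 hpc hpk
    calc |∏ p ∈ s, (lam k - lam p)⁻¹| = ∏ p ∈ s, |(lam k - lam p)⁻¹| := Finset.abs_prod _ _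
      _ ≤ ∏ _p ∈ s, (K * |(k : ℝ)| ^ e) :=
          Finset.prod_le_prod (fun p _ => abs_nonneg _) hbound
      _ = (K * |(k : ℝ)| ^ e) ^ s.card := Finset.prod_const _
      _ ≤ (K * |(k : ℝ)| ^ e) ^ (M - 1) := by
          apply pow_le_pow_right₀ ?_ hcard_s
          nlinarith
      _ = K ^ (M - 1) * (|(k : ℝ)| ^ e) ^ (M - 1) := mul_pow _ _ _
      _ = K ^ (M - 1) * |(k : ℝ)| ^ d := by
          congr 1
          rw [← Real.rpow_natCast (|(k : ℝ)| ^ e) (M - 1), ← Real.rpow_mul (abs_nonneg _)]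
          congr 1
          have hcast : ((M - 1 : ℕ) : ℝ) = (M : ℝ) - 1 := by
            have : (1 : ℕ) ≤ M := by omega
            push_cast [this]
            ring
          rw [hcast, he]
          field_simp
  -- constant for the pointwise estimate
  have hKpos : (0 : ℝ) < K := lt_of_lt_of_le one_pos hK1
  have hMcast : ((M - 1 : ℕ) : ℝ) = (M : ℝ) - 1 := by
    have h1 : (1 : ℕ) ≤ M := by omega
    push_cast [h1]
    ring
  set c : ℝ := ((M : ℝ) - 1) * ((K ^ (M - 1)) ^ 2 * (M : ℝ) ^ (2 * d)) with hc
  have hMrp : (0 : ℝ) < (M : ℝ) ^ (2 * d) := Real.rpow_pos_of_pos (by linarith) _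
  have hcpos : 0 < c := by
    rw [hc]
    have h2 : (0 : ℝ) < (K ^ (M - 1)) ^ 2 := by positivity
    exact mul_pos hM0 (mul_pos h2 hMrp)
  -- the pointwise estimate
  have hpt : ∀ (x : ℤ → ℂ) (k : ℤ), k ≠ 0 →
      ‖blockOp lam E cls x k‖ ^ 2 ≤
        c * ∑ l ∈ E (cls k), |(l : ℝ)| ^ (2 * d) * ‖x l‖ ^ 2 := by
    intro x k hk
    have hk1 : (1 : ℝ) ≤ |(k : ℝ)| := habs1 k hk
    set W : ℝ := K ^ (M - 1) * |(k : ℝ)| ^ d with hW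
    have hW0 : (0 : ℝ) ≤ W := by positivity
    set F : ℤ → ℂ := fun l =>
      (if k ≤ l then
        ((∏ p ∈ (E (cls k)).filter (fun p => p ≤ l ∧ p ≠ k), (lam k - lam p)⁻¹ : ℝ) : ℂ)
      else 0) with hF
    have hBO : blockOp lam E cls x k = ∑ l ∈ E (cls k), F l * x l := rfl
    have hterm : ∀ l ∈ E (cls k), ‖F l * x l‖ ≤ W * ‖x l‖ := by
      intro l hl
      rw [norm_mul]
      apply mul_le_mul_of_nonneg_right ?_ (norm_nonneg _)
      by_cases h : k ≤ l
      · simp only [hF, if_pos h, Complex.norm_real, Real.norm_eq_abs, hW]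
        exact hprod k l hk
      · simp only [hF, if_neg h, norm_zero]; exact hW0
    have hsq2 : (|(k : ℝ)| ^ d) ^ 2 = |(k : ℝ)| ^ (2 * d) := by
      rw [← Real.rpow_natCast (|(k : ℝ)| ^ d) 2, ← Real.rpow_mul (abs_nonneg _)]
      norm_num [mul_comm]
    have hsql : ∀ l ∈ E (cls k), ‖F l * x l‖ ^ 2 ≤
        ((K ^ (M - 1)) ^ 2 * (M : ℝ) ^ (2 * d)) * (|(l : ℝ)| ^ (2 * d) * ‖x l‖ ^ 2) := by
      intro l hl
      obtain ⟨hl0, hlc⟩ := (hE _ _).1 hl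
      have hl1 : (1 : ℝ) ≤ |(l : ℝ)| := habs1 l hl0
      have hd1 : k ≤ l + (M : ℤ) - 1 := hdiam l k hl0 hk hlc.symm
      have hd2 : l ≤ k + (M : ℤ) - 1 := hdiam k l hk hl0 hlc
      have hd1R : (k : ℝ) ≤ (l : ℝ) + (M : ℝ) - 1 := by exact_mod_cast hd1
      have hd2R : (l : ℝ) ≤ (k : ℝ) + (M : ℝ) - 1 := by exact_mod_cast hd2
      have hkl : |(k : ℝ)| ≤ (M : ℝ) * |(l : ℝ)| := by
        have h1 := le_abs_self (l : ℝ)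
        have h2 := neg_le_abs (l : ℝ)
        rcases abs_cases (k : ℝ) with ⟨hk2, _⟩ | ⟨hk2, _⟩ <;> rw [hk2] <;> nlinarith
      have hk2d : |(k : ℝ)| ^ (2 * d) ≤ (M : ℝ) ^ (2 * d) * |(l : ℝ)| ^ (2 * d) := by
        have h3 : |(k : ℝ)| ^ (2 * d) ≤ ((M : ℝ) * |(l : ℝ)|) ^ (2 * d) :=
          Real.rpow_le_rpow (abs_nonneg _) hkl (by linarith)
        rwa [Real.mul_rpow (by linarith) (abs_nonneg _)] at h3
      calc ‖F l * x l‖ ^ 2 ≤ (W * ‖x l‖) ^ 2 := by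
            apply pow_le_pow_left₀ (norm_nonneg _) (hterm l hl)
        _ = (K ^ (M - 1)) ^ 2 * ((|(k : ℝ)| ^ d) ^ 2 * ‖x l‖ ^ 2) := by rw [hW]; ring
        _ = (K ^ (M - 1)) ^ 2 * (|(k : ℝ)| ^ (2 * d) * ‖x l‖ ^ 2) := by rw [hsq2]
        _ ≤ (K ^ (M - 1)) ^ 2 * (((M : ℝ) ^ (2 * d) * |(l : ℝ)| ^ (2 * d)) * ‖x l‖ ^ 2) := by
            gcongr
        _ = ((K ^ (M - 1)) ^ 2 * (M : ℝ) ^ (2 * d)) * (|(l : ℝ)| ^ (2 * d) * ‖x l‖ ^ 2) := by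
            ring
    have hcardR : ((E (cls k)).card : ℝ) ≤ (M : ℝ) - 1 := by
      rw [← hMcast]
      exact_mod_cast hcard (cls k)
    calc ‖blockOp lam E cls x k‖ ^ 2 ≤ (∑ l ∈ E (cls k), ‖F l * x l‖) ^ 2 := by
          apply pow_le_pow_left₀ (norm_nonneg _)
          rw [hBO]
          exact norm_sum_le _ _
      _ ≤ ((E (cls k)).card : ℝ) * ∑ l ∈ E (cls k), ‖F l * x l‖ ^ 2 :=
          sq_sum_le_card_mul_sum_sq
      _ ≤ ((M : ℝ) - 1) * ∑ l ∈ E (cls k), ‖F l * x l‖ ^ 2 := by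
          apply mul_le_mul_of_nonneg_right hcardR
          positivity
      _ ≤ ((M : ℝ) - 1) * ∑ l ∈ E (cls k),
            ((K ^ (M - 1)) ^ 2 * (M : ℝ) ^ (2 * d)) * (|(l : ℝ)| ^ (2 * d) * ‖x l‖ ^ 2) := by
          apply mul_le_mul_of_nonneg_left (Finset.sum_le_sum hsql) (by linarith)
      _ = c * ∑ l ∈ E (cls k), |(l : ℝ)| ^ (2 * d) * ‖x l‖ ^ 2 := by
          rw [← Finset.mul_sum, hc]
          ring
  -- the final constant
  refine ⟨((M - 1 : ℕ) : ℝ) * c, ?_, ?_⟩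
  · have h1 : (0 : ℝ) < ((M - 1 : ℕ) : ℝ) := by rw [hMcast]; linarith
    exact mul_pos h1 hcpos
  intro x hx
  have ha0 : ∀ k : {k : ℤ // k ≠ 0}, 0 ≤ |(k.1 : ℝ)| ^ (2 * d) * ‖x k.1‖ ^ 2 :=
    fun k => by positivity
  set A : ℤ → ENNReal := fun l => ENNReal.ofReal (|(l : ℝ)| ^ (2 * d) * ‖x l‖ ^ 2) with hA
  set f : {k : ℤ // k ≠ 0} → {l : ℤ // l ≠ 0} → ENNReal :=
    fun k l => if l.1 ∈ E (cls k.1) then A l.1 else 0 with hf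
  have hinner : ∀ k : {k : ℤ // k ≠ 0},
      ∑' l : {l : ℤ // l ≠ 0}, f k l
        = ENNReal.ofReal (∑ l ∈ E (cls k.1), |(l : ℝ)| ^ (2 * d) * ‖x l‖ ^ 2) := by
    intro k
    rw [tsum_eq_sum (s := (E (cls k.1)).subtype (fun l => l ≠ 0)) ?_]
    · rw [ENNReal.ofReal_sum_of_nonneg (fun l _ => by positivity),
        ← Finset.sum_subtype_of_mem
          (fun l : ℤ => ENNReal.ofReal (|(l : ℝ)| ^ (2 * d) * ‖x l‖ ^ 2))
          (fun l hl => ((hE _ l).1 hl).1)]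
      apply Finset.sum_congr rfl
      intro l hl
      simp only [hf, hA]
      rw [if_pos (Finset.mem_subtype.1 hl)]
    · intro l hl
      simp only [hf]
      rw [if_neg (fun hmem => hl (Finset.mem_subtype.2 hmem))]
  have hswap : ∀ l : {l : ℤ // l ≠ 0},
      ∑' k : {k : ℤ // k ≠ 0}, f k l ≤ ((M - 1 : ℕ) : ENNReal) * A l.1 := by
    intro l
    have hfe : ∀ k : {k : ℤ // k ≠ 0}, f k l = if k.1 ∈ E (cls l.1) then A l.1 else 0 := by
      intro k
      simp only [hf]
      by_cases h : l.1 ∈ E (cls k.1)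
      · rw [if_pos h, if_pos ((hE _ _).2 ⟨k.2, (((hE _ _).1 h).2).symm⟩)]
      · rw [if_neg h, if_neg (fun hc => h ((hE _ _).2 ⟨l.2, (((hE _ _).1 hc).2).symm⟩))]
    calc ∑' k : {k : ℤ // k ≠ 0}, f k l
        = ∑ _k ∈ (E (cls l.1)).subtype (fun k => k ≠ 0), A l.1 := by
          rw [tsum_congr hfe,
            tsum_eq_sum (s := (E (cls l.1)).subtype (fun k => k ≠ 0)) ?_]
          · exact Finset.sum_congr rfl (fun k hk => if_pos (Finset.mem_subtype.1 hk))
          · exact fun k hk => if_neg (fun hmem => hk (Finset.mem_subtype.2 hmem))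
      _ = ((E (cls l.1)).subtype (fun k => k ≠ 0)).card • A l.1 := Finset.sum_const _
      _ ≤ ((M - 1 : ℕ) : ENNReal) * A l.1 := by
          rw [nsmul_eq_mul]
          apply mul_le_mul_left
          apply Nat.cast_le.2
          calc ((E (cls l.1)).subtype (fun k => k ≠ 0)).card
              = ((E (cls l.1)).filter (fun k => k ≠ 0)).card := Finset.card_subtype _ _
            _ ≤ (E (cls l.1)).card := Finset.card_le_card (Finset.filter_subset _ _)
            _ ≤ M - 1 := hcard _
  set S : ℝ := ∑' k : {k : ℤ // k ≠ 0}, |(k.1 : ℝ)| ^ (2 * d) * ‖x k.1‖ ^ 2 with hS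
  have hS0 : 0 ≤ S := tsum_nonneg fun k => ha0 k
  have hAsum : ∑' l : {l : ℤ // l ≠ 0}, A l.1 = ENNReal.ofReal S := by
    rw [hS, ENNReal.ofReal_tsum_of_nonneg (fun k => ha0 k) hx]
  have hdouble : ∑' k : {k : ℤ // k ≠ 0}, ∑' l : {l : ℤ // l ≠ 0}, f k l
      ≤ ((M - 1 : ℕ) : ENNReal) * ENNReal.ofReal S := by
    rw [ENNReal.tsum_comm]
    calc ∑' l : {l : ℤ // l ≠ 0}, ∑' k : {k : ℤ // k ≠ 0}, f k l
        ≤ ∑' l : {l : ℤ // l ≠ 0}, ((M - 1 : ℕ) : ENNReal) * A l.1 :=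
          ENNReal.tsum_le_tsum hswap
      _ = ((M - 1 : ℕ) : ENNReal) * ∑' l : {l : ℤ // l ≠ 0}, A l.1 := ENNReal.tsum_mul_left
      _ = _ := by rw [hAsum]
  have hBpt : ∀ k : {k : ℤ // k ≠ 0},
      ENNReal.ofReal (‖blockOp lam E cls x k.1‖ ^ 2)
        ≤ ENNReal.ofReal c * ∑' l : {l : ℤ // l ≠ 0}, f k l := by
    intro k
    rw [hinner k, ← ENNReal.ofReal_mul hcpos.le]
    exact ENNReal.ofReal_le_ofReal (hpt x k.1 k.2)
  have hBsum : ∑' k : {k : ℤ // k ≠ 0}, ENNReal.ofReal (‖blockOp lam E cls x k.1‖ ^ 2)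
      ≤ ENNReal.ofReal c * (((M - 1 : ℕ) : ENNReal) * ENNReal.ofReal S) := by
    calc ∑' k : {k : ℤ // k ≠ 0}, ENNReal.ofReal (‖blockOp lam E cls x k.1‖ ^ 2)
        ≤ ∑' k : {k : ℤ // k ≠ 0}, (ENNReal.ofReal c * ∑' l : {l : ℤ // l ≠ 0}, f k l) :=
          ENNReal.tsum_le_tsum hBpt
      _ = ENNReal.ofReal c * ∑' k : {k : ℤ // k ≠ 0}, ∑' l : {l : ℤ // l ≠ 0}, f k l :=
          ENNReal.tsum_mul_left
      _ ≤ _ := mul_le_mul_right hdouble _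
  have hRHSfin : ENNReal.ofReal c * (((M - 1 : ℕ) : ENNReal) * ENNReal.ofReal S) ≠ ⊤ :=
    ENNReal.mul_ne_top ENNReal.ofReal_ne_top
      (ENNReal.mul_ne_top (ENNReal.natCast_ne_top _) ENNReal.ofReal_ne_top)
  have hfin : ∑' k : {k : ℤ // k ≠ 0}, ENNReal.ofReal (‖blockOp lam E cls x k.1‖ ^ 2) ≠ ⊤ :=
    ne_top_of_le_ne_top hRHSfin hBsum
  have hsummable : Summable fun k : {k : ℤ // k ≠ 0} => ‖blockOp lam E cls x k.1‖ ^ 2 := by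
    have h := ENNReal.summable_toReal hfin
    exact h.congr fun k => ENNReal.toReal_ofReal (by positivity)
  refine ⟨hsummable, ?_⟩
  have heq : ∑' k : {k : ℤ // k ≠ 0}, ‖blockOp lam E cls x k.1‖ ^ 2
      = (∑' k : {k : ℤ // k ≠ 0}, ENNReal.ofReal (‖blockOp lam E cls x k.1‖ ^ 2)).toReal := by
    rw [ENNReal.tsum_toReal_eq (fun _ => ENNReal.ofReal_ne_top)]
    exact tsum_congr fun k => (ENNReal.toReal_ofReal (by positivity)).symm
  rw [heq]
  have hle := ENNReal.toReal_mono hRHSfin hBsum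
  rw [ENNReal.toReal_mul, ENNReal.toReal_mul, ENNReal.toReal_ofReal hcpos.le,
    ENNReal.toReal_natCast, ENNReal.toReal_ofReal hS0] at hle
  calc (∑' k : {k : ℤ // k ≠ 0}, ENNReal.ofReal (‖blockOp lam E cls x k.1‖ ^ 2)).toReal
      ≤ c * (((M - 1 : ℕ) : ℝ) * S) := hle
    _ = ((M - 1 : ℕ) : ℝ) * c * S := by ring
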